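/- arXiv:1004.0784 — 4 statements merged into one kernel-verified Lean document; each statement's English description precedes it below -/
import Mathlib

section
/- Let E be a bounded subset of a metric space and N ≥ 2. Suppose X = (x_1,…,x_N) ∈ E^N is a maximin design in the refined sense: δ_X ≥ δ_Y for every design Y ∈ E^N, and moreover for every Y ∈ E^N with δ_Y = δ_X, the number of unordered index pairs {i,j} (i ≠ j) with dist(y_i, y_j) = δ_Y is at least the number of unordered index pairs {i,j} with dist(x_i, x_j) = δ_X. Then E is contained in the union of the closed balls of radius δ_X centered at the points x_i; that is, for every y ∈ E there exists i ∈ {1,…,N} with dist(y, x_i) ≤ δ_X. -/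
/-- The separation distance (maximin criterion value) of a design `x = (x_1, …, x_N)`:
`δ_X = min_{i ≠ j} dist(x_i, x_j)`, expressed as an infimum. -/
noncomputable def sepDist {α : Type*} [MetricSpace α] {N : ℕ} (x : Fin N → α) : ℝ :=
  sInf {r : ℝ | ∃ i j : Fin N, i ≠ j ∧ r = dist (x i) (x j)}

/-- The number of unordered index pairs `{i, j}` (`i ≠ j`) realizing the minimal distance. -/
noncomputable def minPairCount {α : Type*} [MetricSpace α] {N : ℕ} (x : Fin N → α) : ℕ :=
  {p : Fin N × Fin N | p.1 < p.2 ∧ dist (x p.1) (x p.2) = sepDist x}.ncard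

private lemma sep_set_finite {α : Type*} [MetricSpace α] {N : ℕ} (x : Fin N → α) :
    {r : ℝ | ∃ i j : Fin N, i ≠ j ∧ r = dist (x i) (x j)}.Finite := by
  have hsub : {r : ℝ | ∃ i j : Fin N, i ≠ j ∧ r = dist (x i) (x j)} ⊆
      Set.range (fun p : Fin N × Fin N => dist (x p.1) (x p.2)) := by
    rintro r ⟨i, j, _, rfl⟩; exact ⟨(i, j), rfl⟩
  exact (Set.finite_range _).subset hsub

private lemma sep_set_nonempty {α : Type*} [MetricSpace α] {N : ℕ} (hN : 2 ≤ N)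
    (x : Fin N → α) :
    {r : ℝ | ∃ i j : Fin N, i ≠ j ∧ r = dist (x i) (x j)}.Nonempty := by
  refine ⟨dist (x ⟨0, by omega⟩) (x ⟨1, by omega⟩), ⟨0, by omega⟩, ⟨1, by omega⟩, ?_, rfl⟩
  simp [Fin.ext_iff]

private lemma sepDist_mem {α : Type*} [MetricSpace α] {N : ℕ} (hN : 2 ≤ N) (x : Fin N → α) :
    ∃ i j : Fin N, i ≠ j ∧ sepDist x = dist (x i) (x j) :=
  (sep_set_nonempty hN x).csInf_mem (sep_set_finite x)

private lemma sepDist_le {α : Type*} [MetricSpace α] {N : ℕ} (x : Fin N → α)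
    {i j : Fin N} (hij : i ≠ j) : sepDist x ≤ dist (x i) (x j) :=
  csInf_le (sep_set_finite x).bddBelow ⟨i, j, hij, rfl⟩

/-- If `X` is a maximin design in the refined sense over a bounded set `E`, then `E` is
contained in the union of the closed balls of radius `δ_X` centered at the design points. -/
theorem stmt0 {α : Type*} [MetricSpace α] (E : Set α) (hE : Bornology.IsBounded E)
    (N : ℕ) (hN : 2 ≤ N) (x : Fin N → α) (hx : ∀ i, x i ∈ E)
    (hmax : ∀ y : Fin N → α, (∀ i, y i ∈ E) → sepDist y ≤ sepDist x)
    (hrefined : ∀ y : Fin N → α, (∀ i, y i ∈ E) → sepDist y = sepDist x →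
      minPairCount x ≤ minPairCount y) :
    ∀ y ∈ E, ∃ i : Fin N, dist y (x i) ≤ sepDist x := by
  intro y hy
  by_contra hcon
  push_neg at hcon
  obtain ⟨a, b, hab, habd⟩ := sepDist_mem hN x
  set z := Function.update x a y with hz
  have hza : z a = y := Function.update_self _ _ _
  have hzi : ∀ i, i ≠ a → z i = x i := fun i hi => Function.update_of_ne hi _ _
  have hzmem : ∀ i, z i ∈ E := by
    intro i
    by_cases hi : i = a
    · rw [hi, hza]; exact hy
    · rw [hzi i hi]; exact hx i
  have hgt : ∀ i, i ≠ a → sepDist x < dist (z i) (z a) := by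
    intro i hi
    rw [hzi i hi, hza, dist_comm]
    exact hcon i
  have hle : sepDist x ≤ sepDist z := by
    obtain ⟨i, j, hij, hd⟩ := sepDist_mem hN z
    rw [hd]
    by_cases hi : i = a
    · subst hi
      rw [dist_comm]
      exact (hgt j (Ne.symm hij)).le
    · by_cases hj : j = a
      · subst hj
        exact (hgt i hi).le
      · rw [hzi i hi, hzi j hj]
        exact sepDist_le x hij
  have heq : sepDist z = sepDist x := le_antisymm (hmax z hzmem) hle
  have hsub : {p : Fin N × Fin N | p.1 < p.2 ∧ dist (z p.1) (z p.2) = sepDist z} ⊂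
      {p : Fin N × Fin N | p.1 < p.2 ∧ dist (x p.1) (x p.2) = sepDist x} := by
    constructor
    · rintro ⟨i, j⟩ ⟨hij, hd⟩
      rw [heq] at hd
      have hi : i ≠ a := by
        rintro rfl
        rw [dist_comm] at hd
        exact (hgt j (ne_of_gt hij)).ne' hd
      have hj : j ≠ a := by
        rintro rfl
        exact (hgt i (ne_of_lt hij)).ne' hd
      rw [hzi i hi, hzi j hj] at hd
      exact ⟨hij, hd⟩
    · intro hss
      rcases lt_or_gt_of_ne hab with h1 | h1
      · have hmem : (a, b) ∈ {p : Fin N × Fin N | p.1 < p.2 ∧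
            dist (x p.1) (x p.2) = sepDist x} := ⟨h1, habd.symm⟩
        obtain ⟨-, hd⟩ := hss hmem
        rw [heq, dist_comm] at hd
        exact (hgt b (Ne.symm hab)).ne' hd
      · have hmem : (b, a) ∈ {p : Fin N × Fin N | p.1 < p.2 ∧
            dist (x p.1) (x p.2) = sepDist x} := ⟨h1, by rw [dist_comm]; exact habd.symm⟩
        obtain ⟨-, hd⟩ := hss hmem
        rw [heq] at hd
        exact (hgt b (Ne.symm hab)).ne' hd
  have hlt : minPairCount z < minPairCount x :=
    Set.ncard_lt_ncard hsub (Set.toFinite _)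
  exact absurd (hrefined z hzmem heq) (not_le.mpr hlt)
end

section
/- Let λ be a nonzero finite measure on a measurable space S and let U : S → ℝ be a bounded measurable function. Let m = essinf_λ U, and for ε > 0 set A_ε = {x ∈ S : U(x) ≤ m + ε} (so λ(A_ε) > 0 by definition of the essential infimum). Then for every ε > 0, the Gibbs measures μ_β(A) = (∫_A e^{−βU} dλ)/(∫_S e^{−βU} dλ) satisfy lim_{β→∞} μ_β(A_ε) = 1. -/
/-!
Split `S` into `A_ε = {U ≤ m + ε}` and its complement. On the complement the weight `e^{-βU}` is
at most `e^{-β(m+ε)}`, while on `{U ≤ m + ε/2}`, which has positive measure by the definition of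
the essential infimum, it is at least `e^{-β(m+ε/2)}`. Hence the Gibbs mass of the complement is
`O(e^{-βε/2})`, and the mass of `A_ε` tends to `1`.
-/

open MeasureTheory Filter Real Topology

section Gibbs

variable {S : Type*} [MeasurableSpace S] {μ : Measure S} {U : S → ℝ}

noncomputable def gibbsProb (μ : Measure S) (U : S → ℝ) (β : ℝ) (s : Set S) : ℝ :=
  (∫ x in s, exp (-β * U x) ∂μ) / ∫ x, exp (-β * U x) ∂μ

lemma measure_setOf_le_essInf_add_ne_zero [NeZero μ] (hU : IsBoundedUnder (· ≤ ·) (ae μ) U)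
    {δ : ℝ} (hδ : 0 < δ) : μ {x | U x ≤ essInf U μ + δ} ≠ 0 := by
  intro h
  have hae : ∀ᵐ x ∂μ, essInf U μ + δ ≤ U x :=
    measure_eq_zero_iff_ae_notMem.mp h |>.mono fun x hx => (not_le.mp hx).le
  have := le_essInf_of_ae_le _ hae hU.isCoboundedUnder_ge
  linarith

lemma integrable_exp_neg_mul [IsFiniteMeasure μ] (hU : Measurable U) {M : ℝ}
    (hM : ∀ x, |U x| ≤ M) (β : ℝ) : Integrable (fun x => exp (-β * U x)) μ := by
  refine .of_bound (hU.const_mul (-β)).exp.aestronglyMeasurable (exp (|β| * M))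
    (ae_of_all _ fun x => ?_)
  rw [norm_of_nonneg (exp_pos _).le, exp_le_exp, ← abs_neg β]
  calc -β * U x ≤ |-β * U x| := le_abs_self _
    _ = |-β| * |U x| := abs_mul _ _
    _ ≤ |-β| * M := mul_le_mul_of_nonneg_left (hM x) (abs_nonneg _)

lemma gibbsProb_nonneg (β : ℝ) (s : Set S) : 0 ≤ gibbsProb μ U β s :=
  div_nonneg (integral_nonneg fun _ => (exp_pos _).le) (integral_nonneg fun _ => (exp_pos _).le)

lemma gibbsProb_add_gibbsProb_compl [NeZero μ] {β : ℝ}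
    (hint : Integrable (fun x => exp (-β * U x)) μ) {s : Set S} (hs : MeasurableSet s) :
    gibbsProb μ U β s + gibbsProb μ U β sᶜ = 1 := by
  rw [gibbsProb, gibbsProb, ← add_div, integral_add_compl hs hint,
    div_self (integral_exp_pos hint).ne']

lemma gibbsProb_le_of_le_of_le [IsFiniteMeasure μ] {β a b : ℝ} (hβ : 0 ≤ β)
    (hint : Integrable (fun x => exp (-β * U x)) μ) {s t : Set S} (ht : MeasurableSet t)
    (hμt : μ t ≠ 0) (hs_ge : ∀ x ∈ s, a ≤ U x) (ht_le : ∀ x ∈ t, U x ≤ b) :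
    gibbsProb μ U β s ≤ μ.real s / μ.real t * exp (-β * (a - b)) := by
  have hnum : ∫ x in s, exp (-β * U x) ∂μ ≤ exp (-β * a) * μ.real s := by
    refine (Real.le_norm_self _).trans
      (norm_setIntegral_le_of_norm_le_const (measure_lt_top μ s) fun x hx => ?_)
    rw [norm_of_nonneg (exp_pos _).le, exp_le_exp]
    nlinarith [hs_ge x hx]
  have hden : exp (-β * b) * μ.real t ≤ ∫ x, exp (-β * U x) ∂μ :=
    calc exp (-β * b) * μ.real t ≤ ∫ x in t, exp (-β * U x) ∂μ :=
          setIntegral_ge_of_const_le_real ht (measure_ne_top μ t)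
            (fun x hx => exp_le_exp.mpr (by nlinarith [ht_le x hx])) hint.integrableOn
      _ ≤ ∫ x, exp (-β * U x) ∂μ :=
          setIntegral_le_integral hint (ae_of_all _ fun _ => (exp_pos _).le)
  have hμt_pos : 0 < μ.real t := ENNReal.toReal_pos hμt (measure_ne_top μ t)
  calc gibbsProb μ U β s ≤ exp (-β * a) * μ.real s / (exp (-β * b) * μ.real t) :=
        div_le_div₀ (by positivity) hnum (by positivity) hden
    _ = μ.real s / μ.real t * exp (-β * (a - b)) := by
        rw [show -β * (a - b) = -β * a - -β * b by ring, exp_sub]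
        field_simp

lemma tendsto_gibbsProb_atTop_zero [IsFiniteMeasure μ]
    (hint : ∀ β, Integrable (fun x => exp (-β * U x)) μ) {s t : Set S} (ht : MeasurableSet t)
    (hμt : μ t ≠ 0) {a b : ℝ} (hs_ge : ∀ x ∈ s, a ≤ U x) (ht_le : ∀ x ∈ t, U x ≤ b)
    (hba : b < a) : Tendsto (fun β => gibbsProb μ U β s) atTop (𝓝 0) := by
  have hexp : Tendsto (fun β => μ.real s / μ.real t * exp (-β * (a - b))) atTop (𝓝 0) := by
    have hlin : Tendsto (fun β : ℝ => -β * (a - b)) atTop atBot :=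
      tendsto_neg_atTop_atBot.atBot_mul_const (sub_pos.mpr hba)
    simpa using (tendsto_exp_atBot.comp hlin).const_mul (μ.real s / μ.real t)
  refine tendsto_of_tendsto_of_tendsto_of_le_of_le' tendsto_const_nhds hexp
    (.of_forall fun β => gibbsProb_nonneg β s) ?_
  filter_upwards [eventually_ge_atTop 0] with β hβ
  exact gibbsProb_le_of_le_of_le hβ (hint β) ht hμt hs_ge ht_le

end Gibbs

/-- Concentration of Gibbs measures: for a nonzero finite measure `λ` and a bounded measurable
energy `U` with essential infimum `m`, the Gibbs measures
`μ_β(A) = (∫_A e^{−βU} dλ)/(∫ e^{−βU} dλ)` of the set `A_ε = {U ≤ m + ε}` tend to `1` as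
`β → ∞`, for every `ε > 0`. -/
theorem stmt10 {S : Type*} [MeasurableSpace S] (lam : Measure S) [IsFiniteMeasure lam]
    (hlam : lam ≠ 0) (U : S → ℝ) (hU : Measurable U) (M : ℝ) (hM : ∀ x, |U x| ≤ M)
    (ε : ℝ) (hε : 0 < ε) :
    Tendsto
      (fun β : ℝ =>
        (∫ x in {x | U x ≤ essInf U lam + ε}, Real.exp (-β * U x) ∂lam) /
          ∫ x, Real.exp (-β * U x) ∂lam)
      atTop (nhds 1) := by
  have : NeZero lam := ⟨hlam⟩
  set A := {x | U x ≤ essInf U lam + ε}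
  have hint := integrable_exp_neg_mul (μ := lam) hU hM
  have hbdd : IsBoundedUnder (· ≤ ·) (ae lam) U :=
    isBoundedUnder_of ⟨M, fun x => (le_abs_self _).trans (hM x)⟩
  have hcompl : Tendsto (fun β => gibbsProb lam U β Aᶜ) atTop (𝓝 0) :=
    tendsto_gibbsProb_atTop_zero (a := essInf U lam + ε) hint (hU measurableSet_Iic)
      (measure_setOf_le_essInf_add_ne_zero hbdd (half_pos hε))
      (fun x hx => le_of_not_ge hx) (fun x hx => hx) (by linarith)
  have hA : ∀ β, gibbsProb lam U β A = 1 - gibbsProb lam U β Aᶜ := fun β =>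
    eq_sub_of_add_eq (gibbsProb_add_gibbsProb_compl (hint β) (hU measurableSet_Iic))
  show Tendsto (fun β => gibbsProb lam U β A) atTop (𝓝 1)
  simpa [hA] using (tendsto_const_nhds (x := (1 : ℝ))).sub hcompl
end

section
/- Let λ be a nonzero finite measure on a measurable space S and let U : S → ℝ be a bounded measurable function with essential infimum m = essinf_λ U. Then for every ε > 0 and every β ≥ 0, the Gibbs measure μ_β(A) = (∫_A e^{−βU} dλ)/(∫_S e^{−βU} dλ) satisfies the quantitative bound μ_β({U > m + ε}) ≤ (λ({U > m + ε}) / λ({U ≤ m + ε/2})) · e^{−βε/2}. -/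
/-!
On `{U > m + ε}` the Boltzmann weight `e^{-βU}` is at most `e^{-β(m+ε)}`, while on
`{U ≤ m + ε/2}` it is at least `e^{-β(m+ε/2)}`; the latter set has positive `λ`-measure because
`m + ε/2` exceeds the essential infimum. Dividing the two bounds gives the factor `e^{-βε/2}`.
-/

open MeasureTheory Filter Real

section EssInf

variable {α β : Type*} [MeasurableSpace α] {μ : Measure α} [ConditionallyCompleteLinearOrder β]

theorem measure_lt_pos_of_essInf_lt [NeZero μ] {f : α → β}
    (hf : IsBoundedUnder (· ≤ ·) (ae μ) f) {c : β} (h : essInf f μ < c) :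
    0 < μ {x | f x < c} :=
  pos_iff_ne_zero.2 <| frequently_ae_iff.1 <| frequently_lt_of_liminf_lt hf.isCoboundedUnder_flip h

end EssInf

section Gibbs

variable {α : Type*} [MeasurableSpace α] {μ : Measure α} {U : α → ℝ} {β : ℝ}

theorem integrable_exp_neg_mul_of_abs_le [IsFiniteMeasure μ] (hU : Measurable U) {M : ℝ}
    (hM : ∀ x, |U x| ≤ M) : Integrable (fun x => exp (-β * U x)) μ := by
  refine .of_bound (hU.const_mul (-β)).exp.aestronglyMeasurable (exp (|β| * M))
    (ae_of_all _ fun x => ?_)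
  rw [norm_of_nonneg (exp_pos _).le, exp_le_exp]
  calc -β * U x ≤ |-β * U x| := le_abs_self _
    _ = |β| * |U x| := by rw [abs_mul, abs_neg]
    _ ≤ |β| * M := mul_le_mul_of_nonneg_left (hM x) (abs_nonneg β)

theorem setIntegral_exp_div_integral_exp_le [IsFiniteMeasure μ] (hβ : 0 ≤ β)
    (hint : Integrable (fun x => exp (-β * U x)) μ) {A B : Set α} {a b : ℝ}
    (hA : MeasurableSet A) (hB : MeasurableSet B) (hμB : 0 < μ.real B)
    (hUA : ∀ x ∈ A, a ≤ U x) (hUB : ∀ x ∈ B, U x ≤ b) :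
    (∫ x in A, exp (-β * U x) ∂μ) / ∫ x, exp (-β * U x) ∂μ ≤
      μ.real A / μ.real B * exp (-β * (a - b)) := by
  have hnum : ∫ x in A, exp (-β * U x) ∂μ ≤ μ.real A * exp (-β * a) :=
    calc ∫ x in A, exp (-β * U x) ∂μ ≤ ∫ _ in A, exp (-β * a) ∂μ :=
          setIntegral_mono_on hint.integrableOn (integrableOn_const (measure_ne_top _ _)) hA
            fun x hx => exp_le_exp.2 (by nlinarith [hUA x hx])
      _ = μ.real A * exp (-β * a) := by rw [setIntegral_const, smul_eq_mul]
  have hden : μ.real B * exp (-β * b) ≤ ∫ x, exp (-β * U x) ∂μ :=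
    calc μ.real B * exp (-β * b) ≤ ∫ x in B, exp (-β * U x) ∂μ := by
          rw [mul_comm]
          exact setIntegral_ge_of_const_le_real hB (measure_ne_top _ _)
            (fun x hx => exp_le_exp.2 (by nlinarith [hUB x hx])) hint.integrableOn
      _ ≤ ∫ x, exp (-β * U x) ∂μ :=
          setIntegral_le_integral hint (ae_of_all _ fun x => (exp_pos _).le)
  calc (∫ x in A, exp (-β * U x) ∂μ) / ∫ x, exp (-β * U x) ∂μ
      ≤ μ.real A * exp (-β * a) / (μ.real B * exp (-β * b)) :=
        div_le_div₀ (by positivity) hnum (by positivity) hden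
    _ = μ.real A / μ.real B * exp (-β * (a - b)) := by
        rw [mul_div_mul_comm, ← exp_sub]
        ring_nf

end Gibbs

/-- Quantitative Gibbs concentration bound: for a nonzero finite measure `λ`, a bounded
measurable energy `U` with essential infimum `m`, every `ε > 0` and `β ≥ 0`, the Gibbs
measure satisfies
`μ_β({U > m + ε}) ≤ (λ({U > m + ε})/λ({U ≤ m + ε/2})) · e^{−βε/2}`. -/
theorem stmt11 {S : Type*} [MeasurableSpace S] (lam : Measure S) [IsFiniteMeasure lam]
    (hlam : lam ≠ 0) (U : S → ℝ) (hU : Measurable U) (M : ℝ) (hM : ∀ x, |U x| ≤ M)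
    (ε : ℝ) (hε : 0 < ε) (β : ℝ) (hβ : 0 ≤ β) :
    (∫ x in {x | essInf U lam + ε < U x}, Real.exp (-β * U x) ∂lam) /
        (∫ x, Real.exp (-β * U x) ∂lam) ≤
      (lam {x | essInf U lam + ε < U x}).toReal /
          (lam {x | U x ≤ essInf U lam + ε / 2}).toReal *
        Real.exp (-β * ε / 2) := by
  set m := essInf U lam
  have : NeZero lam := ⟨hlam⟩
  have hμB : 0 < lam.real {x | U x ≤ m + ε / 2} := by
    have hbdd : IsBoundedUnder (· ≤ ·) (ae lam) U :=
      isBoundedUnder_of ⟨M, fun x => (abs_le.1 (hM x)).2⟩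
    refine ENNReal.toReal_pos (ne_of_gt ?_) (measure_ne_top _ _)
    exact (measure_lt_pos_of_essInf_lt hbdd (by linarith : m < m + ε / 2)).trans_le
      (measure_mono fun x (hx : U x < m + ε / 2) => hx.le)
  refine (setIntegral_exp_div_integral_exp_le hβ (integrable_exp_neg_mul_of_abs_le hU hM)
    (measurableSet_lt measurable_const hU) (measurableSet_le hU measurable_const) hμB
    (fun x hx => hx.le) (fun x hx => hx)).trans_eq ?_
  rw [measureReal_def, measureReal_def]
  congr 2
  ring
end

section
/- Let a ∈ (0,1), let N ≥ 1 be an integer, let h > 0, and let C > N·h. Then the series Σ_{k=1}^∞ k · ∏_{i=1}^{⌊k/N⌋} (1 − a · (N(i+1) + e)^{−N h / C}) converges. (Here each factor lies in (0,1), since (N(i+1)+e)^{−Nh/C} ∈ (0,1); the factor equals 1 − a·exp(−β_{N(i+1)} N h) for the inverse cooling schedule β_n = (1/C)·log(n + e).) -/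
open Real Finset

private lemma aux_summable {c β : ℝ} (hc : 0 < c) (hβ : 0 < β) :
    Summable (fun k : ℕ => (k : ℝ) * Real.exp (-(c * (k : ℝ) ^ β))) := by
  set n : ℕ := ⌈3 / β⌉₊ with hn
  have hnβ : 3 ≤ (n : ℝ) * β := by
    have := Nat.le_ceil (3 / β)
    calc (3:ℝ) = 3 / β * β := by field_simp
    _ ≤ n * β := by gcongr
  apply summable_of_isBigO_nat (summable_nat_rpow.mpr (show (-2:ℝ) < -1 by norm_num))
  apply Asymptotics.IsBigO.of_bound ((n.factorial : ℝ) / c ^ n)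
  filter_upwards [Filter.eventually_ge_atTop 1] with k hk
  set x : ℝ := (k : ℝ) with hx
  have hx1 : (1:ℝ) ≤ x := Nat.one_le_cast.mpr hk
  have hx0 : (0:ℝ) < x := by linarith
  have ht0 : 0 < c * x ^ β := by positivity
  have h1 : (c * x ^ β) ^ n / n.factorial ≤ Real.exp (c * x ^ β) :=
    Real.pow_div_factorial_le_exp _ ht0.le n
  have hfac : (0:ℝ) < n.factorial := by exact_mod_cast n.factorial_pos
  have h2 : Real.exp (-(c * x ^ β)) ≤ (n.factorial : ℝ) / (c * x ^ β) ^ n := by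
    rw [Real.exp_neg, inv_le_comm₀ (Real.exp_pos _) (by positivity), inv_div]
    exact h1
  have h3 : ((n.factorial : ℝ)) / (c * x ^ β) ^ n = (n.factorial / c ^ n) * x ^ (-(β * n)) := by
    rw [mul_pow, ← Real.rpow_natCast (x ^ β) n, ← Real.rpow_mul hx0.le, Real.rpow_neg hx0.le]
    field_simp
  have h4 : x * Real.exp (-(c * x ^ β)) ≤ (n.factorial / c ^ n) * x ^ (-2 : ℝ) := by
    calc x * Real.exp (-(c * x ^ β)) ≤ x * ((n.factorial / c ^ n) * x ^ (-(β * n))) := by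
          rw [← h3]; exact mul_le_mul_of_nonneg_left h2 hx0.le
      _ = (n.factorial / c ^ n) * (x ^ (1:ℝ) * x ^ (-(β * n))) := by
          rw [Real.rpow_one]; ring
      _ = (n.factorial / c ^ n) * x ^ (1 - β * n) := by
          rw [← Real.rpow_add hx0]; ring_nf
      _ ≤ (n.factorial / c ^ n) * x ^ (-2 : ℝ) := by
          apply mul_le_mul_of_nonneg_left _ (by positivity)
          apply Real.rpow_le_rpow_of_exponent_le hx1
          nlinarith
  have hxp : (0:ℝ) ≤ x ^ (-2:ℝ) := by positivity
  rw [Real.norm_eq_abs, Real.norm_eq_abs, abs_mul, abs_of_nonneg hx0.le,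
    abs_of_nonneg (Real.exp_pos _).le, abs_of_nonneg hxp]
  exact h4

/-- Convergence of the avoidance-probability series: for `a ∈ (0,1)`, an integer `N ≥ 1`,
`h > 0` and `C > N·h`, the series
`∑_k k · ∏_{i=1}^{⌊k/N⌋} (1 − a·(N(i+1) + e)^{−Nh/C})` converges; each factor equals
`1 − a·exp(−β_{N(i+1)} N h)` for the inverse cooling schedule `β_n = (1/C)·log(n + e)`. -/
theorem stmt13 (a : ℝ) (ha0 : 0 < a) (ha1 : a < 1) (N : ℕ) (hN : 1 ≤ N)
    (h C : ℝ) (hh : 0 < h) (hC : (N : ℝ) * h < C) :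
    Summable fun k : ℕ =>
      (k : ℝ) *
        ∏ i ∈ Finset.Icc 1 (k / N),
          (1 - a * ((N : ℝ) * ((i : ℝ) + 1) + Real.exp 1) ^ (-((N : ℝ) * h) / C)) := by
  have hN0 : (0:ℝ) < N := by exact_mod_cast hN
  have hC0 : 0 < C := lt_trans (by positivity) hC
  set α : ℝ := (N : ℝ) * h / C with hαdef
  have hexp : -((N : ℝ) * h) / C = -α := by rw [neg_div]
  have hα0 : 0 < α := by positivity
  have hα1 : α < 1 := (div_lt_one hC0).mpr hC
  set β : ℝ := 1 - α with hβdef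
  have hβ0 : 0 < β := by simp [hβdef]; linarith
  set E : ℝ := Real.exp 1 with hEdef
  have hE : 1 ≤ E := Real.one_le_exp (by norm_num)
  set c0 : ℝ := a * (2 * ((N:ℝ) + E)) ^ (-α) with hc0def
  have hc0 : 0 < c0 := by
    apply mul_pos ha0; apply Real.rpow_pos_of_pos; positivity
  set c1 : ℝ := c0 / (2 * (N:ℝ)) ^ β with hc1def
  have hc1 : 0 < c1 := by
    apply div_pos hc0; apply Real.rpow_pos_of_pos; positivity
  simp only [hexp]
  apply summable_of_isBigO_nat (aux_summable hc1 hβ0)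
  apply Asymptotics.IsBigO.of_bound 1
  filter_upwards [Filter.eventually_ge_atTop (2 * N)] with k hk
  set m : ℕ := k / N with hmdef
  have hm1 : 1 ≤ m := (Nat.one_le_div_iff (by omega)).mpr (by omega)
  have hm1' : (1:ℝ) ≤ m := by exact_mod_cast hm1
  have hm0 : (0:ℝ) < m := by linarith
  -- basic facts about factors
  have hb : ∀ i : ℕ, (1:ℝ) ≤ (N:ℝ) * ((i:ℝ) + 1) + E := by
    intro i
    have : (0:ℝ) ≤ (i:ℝ) := Nat.cast_nonneg i
    nlinarith
  have hX1 : ∀ i : ℕ, ((N:ℝ) * ((i:ℝ) + 1) + E) ^ (-α) ≤ 1 := fun i =>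
    Real.rpow_le_one_of_one_le_of_nonpos (hb i) (by linarith)
  have hX0 : ∀ i : ℕ, 0 < ((N:ℝ) * ((i:ℝ) + 1) + E) ^ (-α) := fun i =>
    Real.rpow_pos_of_pos (by linarith [hb i]) _
  have hfle : ∀ i : ℕ, a * ((N:ℝ) * ((i:ℝ) + 1) + E) ^ (-α) < 1 := by
    intro i
    calc a * ((N:ℝ) * ((i:ℝ) + 1) + E) ^ (-α) ≤ a * 1 :=
        mul_le_mul_of_nonneg_left (hX1 i) ha0.le
      _ < 1 := by linarith
  have hfnonneg : ∀ i : ℕ, 0 ≤ 1 - a * ((N:ℝ) * ((i:ℝ) + 1) + E) ^ (-α) := by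
    intro i; linarith [hfle i]
  have hPnonneg : 0 ≤ ∏ i ∈ Finset.Icc 1 m, (1 - a * ((N:ℝ) * ((i:ℝ) + 1) + E) ^ (-α)) :=
    Finset.prod_nonneg fun i _ => hfnonneg i
  -- Step 1: product ≤ exp of minus sum
  have step1 : ∏ i ∈ Finset.Icc 1 m, (1 - a * ((N:ℝ) * ((i:ℝ) + 1) + E) ^ (-α)) ≤
      Real.exp (-(∑ i ∈ Finset.Icc 1 m, a * ((N:ℝ) * ((i:ℝ) + 1) + E) ^ (-α))) := by
    rw [← Finset.sum_neg_distrib, Real.exp_sum]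
    apply Finset.prod_le_prod (fun i _ => hfnonneg i)
    intro i _
    have := Real.add_one_le_exp (-(a * ((N:ℝ) * ((i:ℝ) + 1) + E) ^ (-α)))
    linarith
  -- Step 2: lower bound on sum
  have step2 : (m:ℝ) * (a * (2 * ((N:ℝ) + E) * m) ^ (-α)) ≤
      ∑ i ∈ Finset.Icc 1 m, a * ((N:ℝ) * ((i:ℝ) + 1) + E) ^ (-α) := by
    have hcard : (Finset.Icc 1 m).card = m := by rw [Nat.card_Icc]; omega
    have := Finset.card_nsmul_le_sum (Finset.Icc 1 m)
      (fun i : ℕ => a * ((N:ℝ) * ((i:ℝ) + 1) + E) ^ (-α))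
      (a * (2 * ((N:ℝ) + E) * m) ^ (-α)) ?_
    · rw [hcard, nsmul_eq_mul] at this; exact this
    · intro i hi
      rw [Finset.mem_Icc] at hi
      have hiu : (i:ℝ) ≤ m := by exact_mod_cast hi.2
      apply mul_le_mul_of_nonneg_left _ ha0.le
      apply Real.rpow_le_rpow_of_nonpos (by linarith [hb i]) _ (by linarith)
      nlinarith
  -- Step 3: rewrite the lower bound as c0 * m^β
  have step3 : (m:ℝ) * (a * (2 * ((N:ℝ) + E) * m) ^ (-α)) = c0 * (m:ℝ) ^ β := by
    rw [Real.mul_rpow (by positivity) hm0.le, hc0def, hβdef, sub_eq_add_neg,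
      Real.rpow_add hm0, Real.rpow_one]
    ring
  -- Step 5: m ≥ k/(2N)
  have step5 : (k:ℝ) / (2 * N) ≤ (m:ℝ) := by
    have h1 : N * m + k % N = k := Nat.div_add_mod k N
    have h2 : k % N < N := Nat.mod_lt _ (by omega)
    have h3 : (k:ℝ) = (N:ℝ) * m + (k % N : ℕ) := by exact_mod_cast h1.symm
    have h4 : ((k % N : ℕ):ℝ) < (N:ℝ) := by exact_mod_cast h2
    rw [div_le_iff₀ (by positivity)]
    nlinarith
  -- Step 6: c1 * k^β ≤ c0 * m^β
  have step6 : c1 * (k:ℝ) ^ β ≤ c0 * (m:ℝ) ^ β := by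
    have h1 : ((k:ℝ) / (2 * N)) ^ β ≤ (m:ℝ) ^ β :=
      Real.rpow_le_rpow (by positivity) step5 hβ0.le
    have h2 : ((k:ℝ) / (2 * N)) ^ β = (k:ℝ) ^ β / (2 * (N:ℝ)) ^ β :=
      Real.div_rpow (Nat.cast_nonneg k) (by positivity : (0:ℝ) ≤ 2 * (N:ℝ)) β
    calc c1 * (k:ℝ) ^ β = c0 * ((k:ℝ) ^ β / (2 * (N:ℝ)) ^ β) := by
          rw [hc1def]; ring
      _ = c0 * ((k:ℝ) / (2 * N)) ^ β := by rw [h2]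
      _ ≤ c0 * (m:ℝ) ^ β := mul_le_mul_of_nonneg_left h1 hc0.le
  -- put everything together
  have main : (k:ℝ) * ∏ i ∈ Finset.Icc 1 m, (1 - a * ((N:ℝ) * ((i:ℝ) + 1) + E) ^ (-α)) ≤
      (k:ℝ) * Real.exp (-(c1 * (k:ℝ) ^ β)) := by
    apply mul_le_mul_of_nonneg_left _ (Nat.cast_nonneg k)
    calc ∏ i ∈ Finset.Icc 1 m, (1 - a * ((N:ℝ) * ((i:ℝ) + 1) + E) ^ (-α)) ≤
        Real.exp (-(∑ i ∈ Finset.Icc 1 m, a * ((N:ℝ) * ((i:ℝ) + 1) + E) ^ (-α))) := step1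
      _ ≤ Real.exp (-(c1 * (k:ℝ) ^ β)) := by
          rw [Real.exp_le_exp]
          have := step2
          rw [step3] at this
          linarith [step6]
  rw [Real.norm_eq_abs, Real.norm_eq_abs, one_mul, abs_mul, abs_mul,
    abs_of_nonneg (Nat.cast_nonneg k), abs_of_nonneg hPnonneg,
    abs_of_nonneg (Real.exp_pos _).le]
  exact main
end
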